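/- arXiv:2504.09469 — 4 statements merged into one kernel-verified Lean document; each statement's English description precedes it below -/
import Mathlib

section
/- Let K be a number field, m ≥ 2 an integer, and x ≥ 1. Then the number of m-tuples (𝔞₁, …, 𝔞_m) of nonzero integral ideals, each of norm at most x, with 𝔞₁ + ⋯ + 𝔞_m = O_K, equals Σ_𝔠 μ(𝔠)·N_K(x/N𝔠)^m, summing over all nonzero ideals 𝔠. -/
/-!
Write the count as `∑_g [⨆ g = ⊤]` over tuples `g` of nonzero ideals of norm `≤ x` and replace the
indicator by `∑_{𝔠 ∣ ⨆ g} μ(𝔠)`. This is the Möbius identity in the unique factorization monoid of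
ideals, which has trivial units: the squarefree divisors of `n` are the products of the subsets `S`
of its set `P` of prime factors, so the divisor sum of `μ` is `∑_{S ⊆ P} (-1)^|S| = [P = ∅]`.
After swapping the sums, `𝔠 ∣ ⨆ g` means that `𝔠` divides every `g i`, and multiplication by `𝔠`
matches the ideals of norm `≤ x / N𝔠` with the ideals of norm `≤ x` divisible by `𝔠`.
-/

open NumberField Ideal

open Classical in
noncomputable def idealMu (K : Type) [Field K] [NumberField K] (I : Ideal (𝓞 K)) : ℤ :=
  if Squarefree I then (-1) ^ (Multiset.card (UniqueFactorizationMonoid.factors I)) else 0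

/-- `NKcount K y` is the number of nonzero integral ideals of `𝓞 K` of norm at most `y`;
it vanishes for `y < 1`. -/
noncomputable def NKcount (K : Type) [Field K] [NumberField K] (y : ℝ) : ℕ :=
  Set.ncard {I : Ideal (𝓞 K) | I ≠ 0 ∧ (absNorm I : ℝ) ≤ y}

open Finset

namespace UniqueFactorizationMonoid

variable {α : Type*} [CommMonoidWithZero α] [UniqueFactorizationMonoid α] [Subsingleton αˣ]

theorem prod_normalizedFactors_eq_self {a : α} (ha : a ≠ 0) : (normalizedFactors a).prod = a :=
  associated_iff_eq.mp (prod_normalizedFactors ha)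

theorem normalizedFactors_finset_prod_of_prime {S : Finset α} (hS : ∀ p ∈ S, Prime p) :
    normalizedFactors (∏ p ∈ S, p) = S.val := by
  rw [prod_eq_multiset_prod, Multiset.map_id']
  exact normalizedFactors_prod_of_prime hS

theorem squarefree_finset_prod_of_prime [Nontrivial α] {S : Finset α} (hS : ∀ p ∈ S, Prime p) :
    Squarefree (∏ p ∈ S, p) := by
  have hne : ∏ p ∈ S, p ≠ 0 := by
    rw [prod_eq_multiset_prod, Multiset.map_id']
    exact S.val.prod_ne_zero_of_prime hS
  rw [squarefree_iff_nodup_normalizedFactors hne, normalizedFactors_finset_prod_of_prime hS]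
  exact S.nodup

theorem moebius_finset_prod_of_prime [Nontrivial α] {S : Finset α} (hS : ∀ p ∈ S, Prime p) :
    moebius (∏ p ∈ S, p) = (-1) ^ #S := by
  rw [(squarefree_finset_prod_of_prime hS).moebius_eq, factors_eq_normalizedFactors,
    normalizedFactors_finset_prod_of_prime hS, card_val]

variable [DecidableEq α]

theorem prime_of_subset_toFinset_normalizedFactors {n : α} {S : Finset α}
    (hS : S ⊆ (normalizedFactors n).toFinset) : ∀ p ∈ S, Prime p := fun p hp =>
  prime_of_normalized_factor p (Multiset.mem_toFinset.mp (hS hp))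

theorem _root_.Squarefree.prod_toFinset_normalizedFactors [Nontrivial α] {a : α}
    (ha : Squarefree a) : ∏ p ∈ (normalizedFactors a).toFinset, p = a := by
  rw [prod_eq_multiset_prod, Multiset.map_id', Multiset.toFinset_val,
    ((squarefree_iff_nodup_normalizedFactors ha.ne_zero).mp ha).dedup,
    prod_normalizedFactors_eq_self ha.ne_zero]

theorem squarefree_and_dvd_iff_exists_subset [Nontrivial α] {n c : α} (hn : n ≠ 0) :
    Squarefree c ∧ c ∣ n ↔ ∃ S ⊆ (normalizedFactors n).toFinset, ∏ p ∈ S, p = c := by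
  constructor
  · rintro ⟨hc, hcn⟩
    refine ⟨(normalizedFactors c).toFinset, fun p hp => ?_, hc.prod_toFinset_normalizedFactors⟩
    rw [Multiset.mem_toFinset] at hp ⊢
    exact Multiset.mem_of_le
      ((dvd_iff_normalizedFactors_le_normalizedFactors hc.ne_zero hn).mp hcn) hp
  · rintro ⟨S, hS, rfl⟩
    refine ⟨squarefree_finset_prod_of_prime (prime_of_subset_toFinset_normalizedFactors hS), ?_⟩
    calc ∏ p ∈ S, p ∣ ∏ p ∈ (normalizedFactors n).toFinset, p := prod_dvd_prod_of_subset _ _ _ hS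
      _ ∣ (normalizedFactors n).prod := by
        rw [prod_eq_multiset_prod, Multiset.map_id']
        exact Multiset.prod_dvd_prod_of_le (Multiset.dedup_le _)
      _ = n := prod_normalizedFactors_eq_self hn

omit [DecidableEq α] in
open Classical in
theorem sum_moebius_of_mem_iff_dvd {n : α} (hn : n ≠ 0) {D : Finset α}
    (hD : ∀ c, c ∈ D ↔ c ∣ n) : ∑ c ∈ D, moebius c = if IsUnit n then 1 else 0 := by
  have : Nontrivial α := ⟨⟨n, 0, hn⟩⟩
  set P := (normalizedFactors n).toFinset
  have hsquarefree : {c ∈ D | Squarefree c} = P.powerset.image fun S => ∏ p ∈ S, p := by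
    ext c
    simp only [mem_filter, mem_image, mem_powerset, hD, and_comm,
      squarefree_and_dvd_iff_exists_subset hn]
    rfl
  have hinj : Set.InjOn (fun S => ∏ p ∈ S, p) (P.powerset : Set (Finset α)) := by
    intro S hS T hT hST
    rw [← val_inj, ← normalizedFactors_finset_prod_of_prime
        (prime_of_subset_toFinset_normalizedFactors (mem_powerset.mp (mem_coe.mp hS))),
      ← normalizedFactors_finset_prod_of_prime
        (prime_of_subset_toFinset_normalizedFactors (mem_powerset.mp (mem_coe.mp hT)))]
    exact congrArg _ hST
  calc ∑ c ∈ D, moebius c = ∑ c ∈ D with Squarefree c, moebius c :=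
        (sum_filter_of_ne fun c _ h => by_contra fun hc => h (moebius_of_not_squarefree hc)).symm
    _ = ∑ S ∈ P.powerset, (-1) ^ #S := by
        rw [hsquarefree, sum_image hinj]
        exact sum_congr rfl fun S hS => moebius_finset_prod_of_prime
          (prime_of_subset_toFinset_normalizedFactors (mem_powerset.mp hS))
    _ = if IsUnit n then 1 else 0 := by
        rw [sum_powerset_neg_one_pow_card]
        exact if_congr (by rw [Multiset.toFinset_eq_empty, normalizedFactors_eq_zero_iff hn])
          rfl rfl

end UniqueFactorizationMonoid

open UniqueFactorizationMonoid

namespace Ideal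

variable {R : Type*} [CommRing R] [IsDedekindDomain R]

theorem dvd_iSup_iff {ι : Type*} {c : Ideal R} {g : ι → Ideal R} :
    c ∣ ⨆ i, g i ↔ ∀ i, c ∣ g i := by
  simp only [dvd_iff_le, iSup_le_iff]

open Classical in
theorem card_filter_iSup_eq_top {ι : Type*} [Fintype ι] [DecidableEq ι] [Nonempty ι]
    {T : Finset (Ideal R)} (hT0 : 0 ∉ T) (hT : ∀ a ∈ T, ∀ c, c ∣ a → c ∈ T) :
    (#{g ∈ Fintype.piFinset fun _ : ι => T | ⨆ i, g i = ⊤} : ℤ) =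
      ∑ c ∈ T, moebius c * #{a ∈ T | c ∣ a} ^ Fintype.card ι := by
  set G := Fintype.piFinset fun _ : ι => T
  obtain ⟨i₀⟩ := ‹Nonempty ι›
  have hmoebius : ∀ g ∈ G,
      ∑ c ∈ T with c ∣ ⨆ i, g i, moebius c = if ⨆ i, g i = ⊤ then 1 else 0 := by
    intro g hg
    have hgT : g i₀ ∈ T := Fintype.mem_piFinset.mp hg i₀
    have hsup : ⨆ i, g i ≠ 0 := fun h => hT0 <| by
      have hg0 : g i₀ = 0 := le_bot_iff.mp ((le_iSup g i₀).trans_eq h)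
      exact hg0 ▸ hgT
    rw [sum_moebius_of_mem_iff_dvd hsup fun c => ?_]
    · simp only [isUnit_iff]
    · exact ⟨fun h => (mem_filter.mp h).2,
        fun h => mem_filter.mpr ⟨hT _ hgT c (dvd_iSup_iff.mp h i₀), h⟩⟩
  have hcount : ∀ c, #{g ∈ G | c ∣ ⨆ i, g i} = #{a ∈ T | c ∣ a} ^ Fintype.card ι := by
    intro c
    calc #{g ∈ G | c ∣ ⨆ i, g i} = #(Fintype.piFinset fun _ : ι => {a ∈ T | c ∣ a}) := by
          congr 1
          ext g
          simp only [G, mem_filter, Fintype.mem_piFinset, dvd_iSup_iff, forall_and]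
      _ = #{a ∈ T | c ∣ a} ^ Fintype.card ι := by
          rw [Fintype.card_piFinset, prod_const, card_univ]
  calc (#{g ∈ G | ⨆ i, g i = ⊤} : ℤ) = ∑ g ∈ G, if ⨆ i, g i = ⊤ then 1 else 0 :=
        natCast_card_filter _ _
    _ = ∑ g ∈ G, ∑ c ∈ T, if c ∣ ⨆ i, g i then moebius c else 0 := by
        refine sum_congr rfl fun g hg => ?_
        rw [← hmoebius g hg, sum_filter]
    _ = ∑ c ∈ T, moebius c * #{g ∈ G | c ∣ ⨆ i, g i} := by
        rw [sum_comm]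
        refine sum_congr rfl fun c _ => ?_
        rw [natCast_card_filter, mul_sum]
        simp only [mul_ite, mul_one, mul_zero]
    _ = ∑ c ∈ T, moebius c * #{a ∈ T | c ∣ a} ^ Fintype.card ι := by
        simp only [hcount, Nat.cast_pow]

end Ideal

open NumberField

section NumberField

variable {K : Type} [Field K] [NumberField K]

theorem finite_setOf_ne_zero_absNorm_le (x : ℝ) :
    {I : Ideal (𝓞 K) | I ≠ 0 ∧ (absNorm I : ℝ) ≤ x}.Finite :=
  (finite_setOfPred_absNorm_le ⌊x⌋₊).subset fun _ hI => Nat.le_floor hI.2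

variable (K) in
noncomputable def idealsOfNormLe (x : ℝ) : Finset (Ideal (𝓞 K)) :=
  (finite_setOf_ne_zero_absNorm_le x).toFinset

theorem mem_idealsOfNormLe {x : ℝ} {I : Ideal (𝓞 K)} :
    I ∈ idealsOfNormLe K x ↔ I ≠ 0 ∧ (absNorm I : ℝ) ≤ x :=
  Set.Finite.mem_toFinset _

theorem mem_idealsOfNormLe_of_dvd {x : ℝ} {c J : Ideal (𝓞 K)} (hJ : J ∈ idealsOfNormLe K x)
    (hcJ : c ∣ J) : c ∈ idealsOfNormLe K x := by
  obtain ⟨hJ0, hJx⟩ := mem_idealsOfNormLe.mp hJ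
  have hJpos : 0 < absNorm J := Nat.pos_of_ne_zero (absNorm_eq_zero_iff.not.mpr hJ0)
  refine mem_idealsOfNormLe.mpr ⟨fun hc => hJ0 (zero_dvd_iff.mp (hc ▸ hcJ)), ?_⟩
  exact le_trans (by exact_mod_cast Nat.le_of_dvd hJpos (map_dvd absNorm hcJ)) hJx

open Classical in
theorem NKcount_div_absNorm {c : Ideal (𝓞 K)} (hc : c ≠ 0) (x : ℝ) :
    NKcount K (x / absNorm c) = #{J ∈ idealsOfNormLe K x | c ∣ J} := by
  have hNc : (0 : ℝ) < absNorm c := by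
    exact_mod_cast Nat.pos_of_ne_zero (absNorm_eq_zero_iff.not.mpr hc)
  rw [NKcount, ← Set.ncard_coe_finset,
    ← Set.ncard_image_of_injective _ (mul_right_injective₀ hc)]
  congr 1
  ext J
  simp only [Set.mem_image, Set.mem_ofPred_eq, coe_filter, mem_idealsOfNormLe, le_div_iff₀' hNc]
  constructor
  · rintro ⟨I, ⟨hI0, hIx⟩, rfl⟩
    exact ⟨⟨mul_ne_zero hc hI0, by rwa [map_mul, Nat.cast_mul]⟩, dvd_mul_right c I⟩
  · rintro ⟨⟨hJ0, hJx⟩, I, rfl⟩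
    exact ⟨I, ⟨right_ne_zero_of_mul hJ0, by rwa [map_mul, Nat.cast_mul] at hJx⟩, rfl⟩

theorem idealMu_eq_moebius (I : Ideal (𝓞 K)) : idealMu K I = moebius I := rfl

open Classical in
theorem tsum_idealMu_mul_NKcount_pow {m : ℕ} (hm : m ≠ 0) (x : ℝ) :
    ∑' c : {I : Ideal (𝓞 K) // I ≠ 0},
        (idealMu K c.1 : ℝ) * (NKcount K (x / absNorm c.1) : ℝ) ^ m =
      ∑ c ∈ idealsOfNormLe K x, (moebius c : ℝ) * (#{J ∈ idealsOfNormLe K x | c ∣ J} : ℝ) ^ m := by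
  set f : Ideal (𝓞 K) → ℝ := fun c => moebius c * (#{J ∈ idealsOfNormLe K x | c ∣ J} : ℝ) ^ m
  calc _ = ∑' c : {I : Ideal (𝓞 K) // I ≠ 0}, f c := by
        refine tsum_congr fun c => ?_
        rw [NKcount_div_absNorm c.2, idealMu_eq_moebius]
    _ = ∑' c, f c := tsum_subtype_eq_of_support_subset fun c hc hc0 => hc <| by
        simp only [f, hc0, moebius_zero, Int.cast_zero, zero_mul]
    _ = ∑ c ∈ idealsOfNormLe K x, f c := tsum_eq_sum fun c hc => by
        have hempty : {J ∈ idealsOfNormLe K x | c ∣ J} = ∅ :=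
          filter_false_of_mem fun J hJ hcJ => hc (mem_idealsOfNormLe_of_dvd hJ hcJ)
        simp only [f, hempty, card_empty, Nat.cast_zero, zero_pow hm, mul_zero]

end NumberField

theorem coprime_tuple_count_eq_mu_sum_general (K : Type) [Field K] [NumberField K] (m : ℕ)
    (hm : 2 ≤ m) (x : ℝ) :
    (Set.ncard {f : Fin m → Ideal (𝓞 K) |
        (∀ i, f i ≠ 0 ∧ (absNorm (f i) : ℝ) ≤ x) ∧ (⨆ i, f i) = ⊤} : ℝ)
      = ∑' c : {I : Ideal (𝓞 K) // I ≠ 0},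
          (idealMu K c.1 : ℝ) * (NKcount K (x / (absNorm c.1 : ℝ)) : ℝ) ^ m := by
  classical
  have : Nonempty (Fin m) := ⟨⟨0, by omega⟩⟩
  have htuples : {f : Fin m → Ideal (𝓞 K) |
      (∀ i, f i ≠ 0 ∧ (absNorm (f i) : ℝ) ≤ x) ∧ (⨆ i, f i) = ⊤} =
      ↑{g ∈ Fintype.piFinset fun _ : Fin m => idealsOfNormLe K x | ⨆ i, g i = ⊤} := by
    ext g
    simp only [Set.mem_ofPred_eq, coe_filter, Fintype.mem_piFinset, mem_idealsOfNormLe]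
  have hcount := card_filter_iSup_eq_top (ι := Fin m) (T := idealsOfNormLe K x)
    (fun h => (mem_idealsOfNormLe.mp h).1 rfl) fun _ hJ _ hcJ => mem_idealsOfNormLe_of_dvd hJ hcJ
  rw [Fintype.card_fin] at hcount
  rw [htuples, Set.ncard_coe_finset, tsum_idealMu_mul_NKcount_pow (by omega)]
  exact_mod_cast hcount

/-- Inclusion–exclusion: the number of `m`-tuples of jointly coprime nonzero ideals, each of
norm at most `x`, equals `∑_𝔠 μ(𝔠) · N_K(x/N𝔠)^m`. -/
theorem coprime_tuple_count_eq_mu_sum (K : Type) [Field K] [NumberField K] (m : ℕ)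
    (hm : 2 ≤ m) (x : ℝ) (hx : 1 ≤ x) :
    (Set.ncard {f : Fin m → Ideal (𝓞 K) |
        (∀ i, f i ≠ 0 ∧ (absNorm (f i) : ℝ) ≤ x) ∧ (⨆ i, f i) = ⊤} : ℝ)
      = ∑' c : {I : Ideal (𝓞 K) // I ≠ 0},
          (idealMu K c.1 : ℝ) * (NKcount K (x / (absNorm c.1 : ℝ)) : ℝ) ^ m :=
  coprime_tuple_count_eq_mu_sum_general K m hm x
end

section
/- Suppose f is continuous on the closed strip a ≤ Re(s) ≤ b, holomorphic in its interior, of finite order there, and satisfies |f(a+it)| ≤ A(1+|t|)^α and |f(b+it)| ≤ B for all real t. Then for a ≤ σ ≤ b, |f(σ+it)| ≪ (1+|t|)^{α(b−σ)/(b−a)}, with implied constant depending only on A, B, α, a, b. -/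
/-!
Multiply `f` by `F(s) = (Q - s²)^(-κ (b - s))` with `κ = α / (2 (b - a))` and `Q` large.
Since `Q - s²` has real part at least `1 + t²` and imaginary part `-2σt`, its argument is
`O(1/|t|)`, so the imaginary part of the exponent only costs a bounded factor and
`|F(σ + it)| ≍ (1 + |t|)^(-2κ(b - σ))`. Thus `f F` is bounded on both boundary lines, hence on
the strip by Phragmén–Lindelöf, and dividing by `F` gives the convexity bound.
-/

open Complex Real Set Filter Asymptotics

theorem Complex.abs_arg_le_abs_im_div_re {z : ℂ} (hz : 0 < z.re) : |arg z| ≤ |z.im| / z.re := by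
  have hlt : |arg z| < π / 2 := abs_arg_lt_pi_div_two_iff.mpr (Or.inl hz)
  rw [← abs_of_pos hz, ← abs_div, ← tan_arg]
  rcases abs_cases (arg z) with ⟨h, h0⟩ | ⟨h, h0⟩
  · rw [h] at hlt ⊢
    exact (le_tan h0 hlt).trans (le_abs_self _)
  · rw [h] at hlt ⊢
    rw [← abs_neg, ← Real.tan_neg]
    exact (le_tan (by linarith) hlt).trans (le_abs_self _)

section ConvexityFactor

variable {Q : ℝ} {s : ℂ}

lemma re_ofReal_sub_sq (Q : ℝ) (s : ℂ) : ((Q : ℂ) - s ^ 2).re = Q - s.re ^ 2 + s.im ^ 2 := by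
  simp only [sq, sub_re, ofReal_re, mul_re]; ring

lemma im_ofReal_sub_sq (Q : ℝ) (s : ℂ) : ((Q : ℂ) - s ^ 2).im = -(2 * s.re * s.im) := by
  simp only [sq, sub_im, ofReal_im, mul_im]; ring

lemma one_add_sq_im_le_re_ofReal_sub_sq (hQ : 1 + s.re ^ 2 ≤ Q) :
    1 + s.im ^ 2 ≤ ((Q : ℂ) - s ^ 2).re := by
  rw [re_ofReal_sub_sq]; linarith

lemma one_le_norm_ofReal_sub_sq (hQ : 1 + s.re ^ 2 ≤ Q) : 1 ≤ ‖(Q : ℂ) - s ^ 2‖ :=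
  (le_add_of_nonneg_right (sq_nonneg _)).trans
    ((one_add_sq_im_le_re_ofReal_sub_sq hQ).trans (re_le_norm _))

lemma sq_one_add_abs_im_le_two_mul_norm_ofReal_sub_sq (hQ : 1 + s.re ^ 2 ≤ Q) :
    (1 + |s.im|) ^ 2 ≤ 2 * ‖(Q : ℂ) - s ^ 2‖ := by
  have := (one_add_sq_im_le_re_ofReal_sub_sq hQ).trans (re_le_norm _)
  nlinarith [sq_abs s.im, sq_nonneg (1 - |s.im|)]

lemma norm_ofReal_sub_sq_le (hQ : 1 + s.re ^ 2 ≤ Q) :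
    ‖(Q : ℂ) - s ^ 2‖ ≤ 2 * Q * (1 + |s.im|) ^ 2 := by
  have hQ0 : 0 ≤ Q := by nlinarith [sq_nonneg s.re]
  calc ‖(Q : ℂ) - s ^ 2‖ ≤ ‖(Q : ℂ)‖ + ‖s ^ 2‖ := norm_sub_le _ _
    _ = Q + s.re ^ 2 + s.im ^ 2 := by
      rw [norm_real, Real.norm_of_nonneg hQ0, norm_pow, Complex.sq_norm, normSq_apply]; ring
    _ ≤ 2 * Q * (1 + |s.im|) ^ 2 := by nlinarith [sq_abs s.im, abs_nonneg s.im]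

lemma abs_im_mul_arg_ofReal_sub_sq_le (hQ : 1 + s.re ^ 2 ≤ Q) :
    |s.im * arg ((Q : ℂ) - s ^ 2)| ≤ Q := by
  set w : ℂ := (Q : ℂ) - s ^ 2
  have hre : 1 + s.im ^ 2 ≤ w.re := one_add_sq_im_le_re_ofReal_sub_sq hQ
  have hpos : 0 < w.re := by linarith [sq_nonneg s.im]
  have harg : |arg w| * w.re ≤ 2 * |s.re| * |s.im| := by
    have him : |w.im| = 2 * |s.re| * |s.im| := by
      rw [im_ofReal_sub_sq, abs_neg, abs_mul, abs_mul, abs_two]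
    rw [← le_div_iff₀ hpos, ← him]
    exact abs_arg_le_abs_im_div_re hpos
  have hσ : 2 * |s.re| ≤ Q := by nlinarith [sq_abs s.re, sq_nonneg (|s.re| - 1)]
  rw [abs_mul]
  refine le_of_mul_le_mul_right ?_ (by positivity : 0 < 1 + s.im ^ 2)
  calc |s.im| * |arg w| * (1 + s.im ^ 2) ≤ |s.im| * (|arg w| * w.re) := by
        rw [mul_assoc]; gcongr
    _ ≤ |s.im| * (2 * |s.re| * |s.im|) := by gcongr
    _ ≤ Q * (1 + s.im ^ 2) := by nlinarith [sq_abs s.im, abs_nonneg s.im]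

noncomputable def convexityFactor (Q κ b : ℝ) (s : ℂ) : ℂ :=
  ((Q : ℂ) - s ^ 2) ^ (-(κ : ℂ) * (b - s))

lemma norm_convexityFactor (κ b : ℝ) (hQ : 1 + s.re ^ 2 ≤ Q) :
    ‖convexityFactor Q κ b s‖ =
      ‖(Q : ℂ) - s ^ 2‖ ^ (-(κ * (b - s.re))) / rexp (arg ((Q : ℂ) - s ^ 2) * (κ * s.im)) := by
  have hw : (Q : ℂ) - s ^ 2 ≠ 0 :=
    norm_pos_iff.mp (one_pos.trans_le (one_le_norm_ofReal_sub_sq hQ))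
  rw [convexityFactor, norm_cpow_of_ne_zero hw]
  simp

lemma differentiableAt_convexityFactor (κ b : ℝ) (hQ : 1 + s.re ^ 2 ≤ Q) :
    DifferentiableAt ℂ (convexityFactor Q κ b) s := by
  have hre : 0 < ((Q : ℂ) - s ^ 2).re := by
    linarith [one_add_sq_im_le_re_ofReal_sub_sq hQ, sq_nonneg s.im]
  exact ((differentiableAt_const _).sub (differentiableAt_pow 2)).cpow
    ((differentiableAt_const _).mul ((differentiableAt_const _).sub differentiableAt_id))
    (mem_slitPlane_iff.mpr (Or.inl hre))

variable {κ b : ℝ}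

lemma norm_convexityFactor_le_rpow_mul_exp (hQ : 1 + s.re ^ 2 ≤ Q) (hκ : 0 ≤ κ) :
    ‖convexityFactor Q κ b s‖ ≤ ‖(Q : ℂ) - s ^ 2‖ ^ (-(κ * (b - s.re))) * rexp (κ * Q) := by
  rw [norm_convexityFactor κ b hQ, div_eq_mul_inv, ← Real.exp_neg]
  refine mul_le_mul_of_nonneg_left (exp_le_exp.mpr ?_) (by positivity)
  have := abs_im_mul_arg_ofReal_sub_sq_le hQ
  nlinarith [neg_abs_le (s.im * arg ((Q : ℂ) - s ^ 2))]

lemma rpow_mul_exp_neg_le_norm_convexityFactor (hQ : 1 + s.re ^ 2 ≤ Q) (hκ : 0 ≤ κ) :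
    ‖(Q : ℂ) - s ^ 2‖ ^ (-(κ * (b - s.re))) * rexp (-(κ * Q)) ≤ ‖convexityFactor Q κ b s‖ := by
  rw [norm_convexityFactor κ b hQ, div_eq_mul_inv, ← Real.exp_neg]
  refine mul_le_mul_of_nonneg_left (exp_le_exp.mpr ?_) (by positivity)
  have := abs_im_mul_arg_ofReal_sub_sq_le hQ
  nlinarith [le_abs_self (s.im * arg ((Q : ℂ) - s ^ 2))]

lemma norm_convexityFactor_le (hQ : 1 + s.re ^ 2 ≤ Q) (hκ : 0 ≤ κ) (hb : s.re ≤ b) :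
    ‖convexityFactor Q κ b s‖ ≤ rexp (κ * Q) := by
  refine (norm_convexityFactor_le_rpow_mul_exp hQ hκ).trans
    (mul_le_of_le_one_left (by positivity) ?_)
  exact rpow_le_one_of_one_le_of_nonpos (one_le_norm_ofReal_sub_sq hQ)
    (neg_nonpos.mpr (mul_nonneg hκ (sub_nonneg.mpr hb)))

lemma one_add_abs_im_rpow_mul_norm_convexityFactor_le (hQ : 1 + s.re ^ 2 ≤ Q) (hκ : 0 ≤ κ)
    (hb : s.re ≤ b) :
    (1 + |s.im|) ^ (2 * (κ * (b - s.re))) * ‖convexityFactor Q κ b s‖ ≤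
      2 ^ (κ * (b - s.re)) * rexp (κ * Q) := by
  set p := κ * (b - s.re)
  have hw : 0 < ‖(Q : ℂ) - s ^ 2‖ := one_pos.trans_le (one_le_norm_ofReal_sub_sq hQ)
  calc (1 + |s.im|) ^ (2 * p) * ‖convexityFactor Q κ b s‖
      ≤ (2 * ‖(Q : ℂ) - s ^ 2‖) ^ p * (‖(Q : ℂ) - s ^ 2‖ ^ (-p) * rexp (κ * Q)) := by
        rw [rpow_mul (x := 1 + |s.im|) (by positivity), rpow_two]
        gcongr
        exacts [sq_one_add_abs_im_le_two_mul_norm_ofReal_sub_sq hQ,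
          norm_convexityFactor_le_rpow_mul_exp hQ hκ]
    _ = 2 ^ p * rexp (κ * Q) := by
        rw [mul_rpow zero_le_two hw.le, rpow_neg hw.le]
        field_simp

lemma one_le_mul_norm_convexityFactor (hQ : 1 + s.re ^ 2 ≤ Q) (hκ : 0 ≤ κ) (hb : s.re ≤ b) :
    1 ≤ (2 * Q) ^ (κ * (b - s.re)) * rexp (κ * Q) * (1 + |s.im|) ^ (2 * (κ * (b - s.re))) *
      ‖convexityFactor Q κ b s‖ := by
  set p := κ * (b - s.re)
  have hw : 0 < ‖(Q : ℂ) - s ^ 2‖ := one_pos.trans_le (one_le_norm_ofReal_sub_sq hQ)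
  have hQ0 : 0 ≤ Q := by nlinarith [sq_nonneg s.re]
  calc (1 : ℝ) = (‖(Q : ℂ) - s ^ 2‖ ^ p * rexp (κ * Q)) *
        (‖(Q : ℂ) - s ^ 2‖ ^ (-p) * rexp (-(κ * Q))) := by
        rw [rpow_neg hw.le, Real.exp_neg]; field_simp
    _ ≤ ((2 * Q) ^ p * rexp (κ * Q) * (1 + |s.im|) ^ (2 * p)) * ‖convexityFactor Q κ b s‖ := by
        refine mul_le_mul ?_ (rpow_mul_exp_neg_le_norm_convexityFactor hQ hκ) (by positivity)
          (by positivity)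
        rw [rpow_mul (x := 1 + |s.im|) (by positivity), rpow_two, mul_right_comm,
          ← mul_rpow (by positivity) (by positivity)]
        gcongr
        exact norm_ofReal_sub_sq_le hQ

end ConvexityFactor

lemma eventually_rpow_le_exp_mul_atTop (c : ℝ) {d : ℝ} (hd : 0 < d) :
    ∀ᶠ x : ℝ in atTop, x ^ c ≤ rexp (d * x) := by
  filter_upwards [(isLittleO_rpow_exp_pos_mul_atTop c hd).bound one_pos] with x hx
  simpa [abs_of_pos (exp_pos _)] using (le_abs_self _).trans hx

lemma isBigO_exp_exp_of_norm_le_exp_rpow {g : ℂ → ℂ} {a b C₀ c d : ℝ} (hd : 0 < d)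
    (hg : ∀ s : ℂ, a ≤ s.re → s.re ≤ b → ‖g s‖ ≤ C₀ * rexp (|s.im| ^ c)) :
    g =O[comap (_root_.abs ∘ im) atTop ⊓ 𝓟 (re ⁻¹' Ioo a b)]
      fun z ↦ rexp (1 * rexp (d * |z.im|)) := by
  refine IsBigO.of_bound C₀ ?_
  have him : ∀ᶠ z : ℂ in comap (_root_.abs ∘ im) atTop ⊓ 𝓟 (re ⁻¹' Ioo a b),
      |z.im| ^ c ≤ rexp (d * |z.im|) :=
    (tendsto_comap.mono_left inf_le_left).eventually (eventually_rpow_le_exp_mul_atTop c hd)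
  filter_upwards [him, mem_inf_of_right (mem_principal_self _)] with z hz hstrip
  have hgz := hg z hstrip.1.le hstrip.2.le
  have hC₀ : 0 ≤ C₀ := (mul_nonneg_iff_of_pos_right (exp_pos _)).mp ((norm_nonneg _).trans hgz)
  calc ‖g z‖ ≤ C₀ * rexp (|z.im| ^ c) := hgz
    _ ≤ C₀ * ‖rexp (1 * rexp (d * |z.im|))‖ := by
      rw [one_mul, norm_of_nonneg (exp_pos _).le]
      gcongr

theorem PhragmenLindelof.vertical_strip_of_norm_le_exp_rpow {g : ℂ → ℂ} {a b C₀ c M : ℝ}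
    (hab : a < b) (hcont : ContinuousOn g {s : ℂ | a ≤ s.re ∧ s.re ≤ b})
    (hdiff : DifferentiableOn ℂ g {s : ℂ | a < s.re ∧ s.re < b})
    (hg : ∀ s : ℂ, a ≤ s.re → s.re ≤ b → ‖g s‖ ≤ C₀ * rexp (|s.im| ^ c))
    (ha : ∀ s : ℂ, s.re = a → ‖g s‖ ≤ M) (hb : ∀ s : ℂ, s.re = b → ‖g s‖ ≤ M)
    {s : ℂ} (hsa : a ≤ s.re) (hsb : s.re ≤ b) : ‖g s‖ ≤ M := by
  have hd : 0 < π / (2 * (b - a)) := by have := sub_pos.mpr hab; positivity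
  refine PhragmenLindelof.vertical_strip ⟨hdiff, ?_⟩
    ⟨_, ?_, 1, isBigO_exp_exp_of_norm_le_exp_rpow hd hg⟩ ha hb hsa hsb
  · rwa [closure_preimage_re, closure_Ioo hab.ne]
  · exact div_lt_div_of_pos_left pi_pos (sub_pos.mpr hab) (by linarith)

section Strip

variable {f : ℂ → ℂ} {a b A B Q κ C₀ c : ℝ}

lemma norm_mul_convexityFactor_le (hab : a < b) (hκ : 0 ≤ κ) (hA : 0 ≤ A) (hB : 0 ≤ B)
    (hQ : ∀ s : ℂ, a ≤ s.re → s.re ≤ b → 1 + s.re ^ 2 ≤ Q)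
    (hcont : ContinuousOn f {s : ℂ | a ≤ s.re ∧ s.re ≤ b})
    (hdiff : DifferentiableOn ℂ f {s : ℂ | a < s.re ∧ s.re < b})
    (hord : ∀ s : ℂ, a ≤ s.re → s.re ≤ b → ‖f s‖ ≤ C₀ * rexp (|s.im| ^ c))
    (hfa : ∀ t : ℝ, ‖f (a + t * I)‖ ≤ A * (1 + |t|) ^ (2 * (κ * (b - a))))
    (hfb : ∀ t : ℝ, ‖f (b + t * I)‖ ≤ B) {s : ℂ} (hsa : a ≤ s.re) (hsb : s.re ≤ b) :
    ‖f s * convexityFactor Q κ b s‖ ≤ max (A * 2 ^ (κ * (b - a))) B * rexp (κ * Q) := by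
  set F := convexityFactor Q κ b
  have hF : ∀ s : ℂ, a ≤ s.re → s.re ≤ b → ‖F s‖ ≤ rexp (κ * Q) := fun s h₁ h₂ ↦
    norm_convexityFactor_le (hQ s h₁ h₂) hκ h₂
  refine PhragmenLindelof.vertical_strip_of_norm_le_exp_rpow (g := fun z ↦ f z * F z)
    (C₀ := C₀ * rexp (κ * Q)) (c := c) hab
    (hcont.mul fun z hz ↦
      (differentiableAt_convexityFactor κ b (hQ z hz.1 hz.2)).continuousAt.continuousWithinAt)
    (hdiff.mul fun z hz ↦
      (differentiableAt_convexityFactor κ b (hQ z hz.1.le hz.2.le)).differentiableWithinAt)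
    (fun z h₁ h₂ ↦ ?_) (fun z hz ↦ ?_) (fun z hz ↦ ?_) hsa hsb
  · rw [norm_mul, mul_right_comm]
    exact mul_le_mul (hord z h₁ h₂) (hF z h₁ h₂) (norm_nonneg _)
      ((norm_nonneg _).trans (hord z h₁ h₂))
  · have hzb : z.re ≤ b := hz ▸ hab.le
    have hfz : ‖f z‖ ≤ A * (1 + |z.im|) ^ (2 * (κ * (b - z.re))) := by
      rw [← re_add_im z, hz]; simpa [hz] using hfa z.im
    calc ‖f z * F z‖ ≤ A * ((1 + |z.im|) ^ (2 * (κ * (b - z.re))) * ‖F z‖) := by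
          rw [norm_mul, ← mul_assoc]; gcongr
      _ ≤ A * (2 ^ (κ * (b - a)) * rexp (κ * Q)) := by
          refine mul_le_mul_of_nonneg_left ?_ hA
          simpa [hz] using one_add_abs_im_rpow_mul_norm_convexityFactor_le (hQ z hz.ge hzb) hκ hzb
      _ ≤ _ := by rw [← mul_assoc]; gcongr; exact le_max_left _ _
  · have hfz : ‖f z‖ ≤ B := by rw [← re_add_im z, hz]; exact hfb z.im
    calc ‖f z * F z‖ ≤ B * rexp (κ * Q) := by
          rw [norm_mul]; exact mul_le_mul hfz (hF z (hz ▸ hab.le) hz.le) (norm_nonneg _) hB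
      _ ≤ _ := by gcongr; exact le_max_right _ _

lemma norm_le_const_mul_one_add_abs_im_rpow (hab : a < b) (hκ : 0 ≤ κ) (hA : 0 ≤ A)
    (hB : 0 ≤ B) (hQ : ∀ s : ℂ, a ≤ s.re → s.re ≤ b → 1 + s.re ^ 2 ≤ Q)
    (hcont : ContinuousOn f {s : ℂ | a ≤ s.re ∧ s.re ≤ b})
    (hdiff : DifferentiableOn ℂ f {s : ℂ | a < s.re ∧ s.re < b})
    (hord : ∀ s : ℂ, a ≤ s.re → s.re ≤ b → ‖f s‖ ≤ C₀ * rexp (|s.im| ^ c))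
    (hfa : ∀ t : ℝ, ‖f (a + t * I)‖ ≤ A * (1 + |t|) ^ (2 * (κ * (b - a))))
    (hfb : ∀ t : ℝ, ‖f (b + t * I)‖ ≤ B) {s : ℂ} (hsa : a ≤ s.re) (hsb : s.re ≤ b) :
    ‖f s‖ ≤ (2 * Q) ^ (κ * (b - a)) * max (A * 2 ^ (κ * (b - a))) B * rexp (κ * Q) ^ 2 *
      (1 + |s.im|) ^ (2 * (κ * (b - s.re))) := by
  set F := convexityFactor Q κ b
  have hQ1 : 1 ≤ 2 * Q := by nlinarith [hQ s hsa hsb, sq_nonneg s.re]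
  calc ‖f s‖ ≤ ‖f s‖ * ((2 * Q) ^ (κ * (b - s.re)) * rexp (κ * Q) *
        (1 + |s.im|) ^ (2 * (κ * (b - s.re))) * ‖F s‖) :=
        le_mul_of_one_le_right (norm_nonneg _)
          (one_le_mul_norm_convexityFactor (hQ s hsa hsb) hκ hsb)
    _ = (2 * Q) ^ (κ * (b - s.re)) * rexp (κ * Q) * (1 + |s.im|) ^ (2 * (κ * (b - s.re))) *
        ‖f s * F s‖ := by rw [norm_mul]; ring
    _ ≤ (2 * Q) ^ (κ * (b - a)) * rexp (κ * Q) * (1 + |s.im|) ^ (2 * (κ * (b - s.re))) *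
        (max (A * 2 ^ (κ * (b - a))) B * rexp (κ * Q)) := by
      gcongr
      exact norm_mul_convexityFactor_le hab hκ hA hB hQ hcont hdiff hord hfa hfb hsa hsb
    _ = _ := by ring

end Strip

/-- Phragmén–Lindelöf convexity principle on a vertical strip: if `f` is continuous on the
closed strip `a ≤ Re s ≤ b`, holomorphic in its interior, of finite order there, and
satisfies `|f(a+it)| ≤ A(1+|t|)^α` and `|f(b+it)| ≤ B`, then for `a ≤ σ ≤ b` one has
`|f(σ+it)| ≪ (1+|t|)^{α(b-σ)/(b-a)}`, with implied constant depending only on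
`A, B, α, a, b`. -/
theorem phragmen_lindelof_strip (a b α A B : ℝ) (hab : a < b)
    (hα : 0 ≤ α) (hA : 0 ≤ A) (hB : 0 ≤ B) :
    ∃ C : ℝ, 0 < C ∧ ∀ f : ℂ → ℂ,
      ContinuousOn f {s : ℂ | a ≤ s.re ∧ s.re ≤ b} →
      DifferentiableOn ℂ f {s : ℂ | a < s.re ∧ s.re < b} →
      (∃ C₀ c : ℝ, 0 ≤ c ∧ ∀ s : ℂ, a ≤ s.re → s.re ≤ b →
        ‖f s‖ ≤ C₀ * Real.exp (|s.im| ^ c)) →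
      (∀ t : ℝ, ‖f (a + t * I)‖ ≤ A * (1 + |t|) ^ α) →
      (∀ t : ℝ, ‖f (b + t * I)‖ ≤ B) →
      ∀ σ t : ℝ, a ≤ σ → σ ≤ b →
        ‖f (σ + t * I)‖ ≤ C * (1 + |t|) ^ (α * (b - σ) / (b - a)) := by
  set κ := α / (2 * (b - a))
  set Q := 1 + max |a| |b| ^ 2
  have hba : 0 < b - a := sub_pos.mpr hab
  have hκ : 0 ≤ κ := by positivity
  have hκσ : ∀ σ : ℝ, 2 * (κ * (b - σ)) = α * (b - σ) / (b - a) := fun σ ↦ by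
    simp only [κ]; field_simp
  have hκa : κ * (b - a) = α / 2 := by simp only [κ]; field_simp
  have hQ : ∀ s : ℂ, a ≤ s.re → s.re ≤ b → 1 + s.re ^ 2 ≤ Q := fun s h₁ h₂ ↦ by
    rw [← sq_abs]; change _ ≤ 1 + _; gcongr; exact abs_le_max_abs_abs h₁ h₂
  refine ⟨(2 * Q) ^ (α / 2) * max (A * 2 ^ (α / 2)) B * rexp (κ * Q) ^ 2 + 1, by positivity, ?_⟩
  rintro f hcont hdiff ⟨C₀, c, -, hord⟩ hfa hfb σ t hσa hσb
  have hfa' : ∀ t : ℝ, ‖f (a + t * I)‖ ≤ A * (1 + |t|) ^ (2 * (κ * (b - a))) := by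
    rwa [hκa, mul_div_cancel₀ α two_ne_zero]
  have key := norm_le_const_mul_one_add_abs_im_rpow hab hκ hA hB hQ hcont hdiff hord hfa' hfb
    (s := σ + t * I) (by simpa using hσa) (by simpa using hσb)
  simp only [add_re, ofReal_re, mul_re, I_re, mul_zero, ofReal_im, I_im, mul_one, sub_self,
    add_zero, add_im, mul_im, zero_add, hκσ, hκa] at key
  exact key.trans (by gcongr; linarith)
end

section
/- Let K be an abelian number field with degree n_K satisfying 4 ≤ n_K ≤ 12, and assume the fourth-moment bounds ∫_T^{2T}|ζ(1/2+it)|⁴dt ≪ T^{1+ε}, ∫_T^{2T}|L(1/2+it,χ)|⁴dt ≪ q T^{1+ε}, the twelfth-moment bounds ∫_T^{2T}|ζ(1/2+it)|^{12}dt ≪ T^{2+ε}, ∫_T^{2T}|L(1/2+it,χ)|^{12}dt ≪ q³T^{2+ε}, and the sixth-moment bound ∫_T^{2T}|ζ(1/2+it)|⁶dt ≪ T^{5/4+ε}. Then ∫_T^{2T}|ζ_K(1/2+it)| dt ≪_{K,ε} T^{n_K/8 + 1/2 + ε} for T ≥ 2. -/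
/-!
Each assumed moment bound has the shape `∫_T^{2T} |L(1/2+it)|^k dt ≪ T^{k/8 + 1/2 + ε}`
(for `k = 4, 6, 12`). Hölder's inequality with exponents `k_j` satisfying `∑ 1/k_j = 1` therefore
bounds the first moment of `ζ_K = ∏ L(·, χ_j)` by `T^{∑ (k_j/8 + 1/2 + ε)/k_j} = T^{n/8 + 1/2 + ε}`.
Such exponents exist for `4 ≤ n ≤ 12`: take `(12 - n)/2` fourth moments, one sixth moment of `ζ`
when `n` is odd, and twelfth moments for the rest.
-/

open NumberField Ideal Complex intervalIntegral

open MeasureTheory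

theorem integral_prod_le_prod_integral_rpow_rpow_inv {α ι : Type*} [MeasurableSpace α]
    {μ : Measure α} (s : Finset ι) {g : ι → α → ℝ} (hg : ∀ i ∈ s, 0 ≤ᵐ[μ] g i) {p : ι → ℝ}
    (hp : ∀ i ∈ s, 0 < p i) (hsum : ∑ i ∈ s, (p i)⁻¹ = 1)
    (hint : ∀ i ∈ s, Integrable (fun x ↦ g i x ^ p i) μ) :
    ∫ x, ∏ i ∈ s, g i x ∂μ ≤ ∏ i ∈ s, (∫ x, g i x ^ p i ∂μ) ^ (p i)⁻¹ := by
  have hpow : ∀ i ∈ s, 0 ≤ᵐ[μ] fun x ↦ g i x ^ p i :=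
    fun i hi ↦ (hg i hi).mono fun x hx ↦ Real.rpow_nonneg hx _
  have hpow_integral : ∀ i ∈ s, 0 ≤ ∫ x, g i x ^ p i ∂μ :=
    fun i hi ↦ integral_nonneg_of_ae (hpow i hi)
  have hrhs : 0 ≤ ∏ i ∈ s, (∫ x, g i x ^ p i ∂μ) ^ (p i)⁻¹ :=
    Finset.prod_nonneg fun i hi ↦ Real.rpow_nonneg (hpow_integral i hi) _
  by_cases hprod : Integrable (fun x ↦ ∏ i ∈ s, g i x) μ
  swap
  · rw [integral_undef hprod]; exact hrhs
  have hg' : ∀ᵐ x ∂μ, ∀ i ∈ s, 0 ≤ g i x := (Filter.eventually_all_finset s).2 hg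
  rw [← ENNReal.ofReal_le_ofReal_iff hrhs, ofReal_integral_eq_lintegral_ofReal hprod
    (hg'.mono fun x hx ↦ Finset.prod_nonneg hx)]
  calc ∫⁻ x, ENNReal.ofReal (∏ i ∈ s, g i x) ∂μ
      = ∫⁻ x, ∏ i ∈ s, ENNReal.ofReal (g i x ^ p i) ^ (p i)⁻¹ ∂μ := by
        refine lintegral_congr_ae (hg'.mono fun x hx ↦ ?_)
        dsimp only
        rw [ENNReal.ofReal_prod_of_nonneg hx]
        refine Finset.prod_congr rfl fun i hi ↦ ?_
        rw [ENNReal.ofReal_rpow_of_nonneg (Real.rpow_nonneg (hx i hi) _) (inv_nonneg.2 (hp i hi).le),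
          Real.rpow_rpow_inv (hx i hi) (hp i hi).ne']
    _ ≤ ∏ i ∈ s, (∫⁻ x, ENNReal.ofReal (g i x ^ p i) ∂μ) ^ (p i)⁻¹ :=
        ENNReal.lintegral_prod_norm_pow_le s (fun i hi ↦ (hint i hi).aemeasurable.ennreal_ofReal)
          hsum fun i hi ↦ inv_nonneg.2 (hp i hi).le
    _ = ENNReal.ofReal (∏ i ∈ s, (∫ x, g i x ^ p i ∂μ) ^ (p i)⁻¹) := by
        rw [ENNReal.ofReal_prod_of_nonneg fun i hi ↦ Real.rpow_nonneg (hpow_integral i hi) _]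
        refine Finset.prod_congr rfl fun i hi ↦ ?_
        rw [← ofReal_integral_eq_lintegral_ofReal (hint i hi) (hpow i hi),
          ENNReal.ofReal_rpow_of_nonneg (hpow_integral i hi) (inv_nonneg.2 (hp i hi).le)]

theorem intervalIntegral_norm_prod_le_of_moment_bounds {ι E : Type*} [Fintype ι]
    [SeminormedCommRing E] [NormMulClass E] [NormOneClass E] (f : ι → ℝ → E) {k : ι → ℕ}
    (hk : ∀ i, 0 < k i) (hsum : ∑ i, (k i : ℝ)⁻¹ = 1) {a b : ℝ} (hab : a ≤ b)
    (hint : ∀ i, IntervalIntegrable (fun t ↦ ‖f i t‖ ^ k i) volume a b) {c : ι → ℝ}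
    (hc : ∀ i, 0 ≤ c i) {X α β : ℝ} (hX : 0 < X)
    (hmoment : ∀ i, ∫ t in a..b, ‖f i t‖ ^ k i ≤ c i * X ^ (α * k i + β)) :
    ∫ t in a..b, ‖∏ i, f i t‖ ≤ (∏ i, c i ^ (k i : ℝ)⁻¹) * X ^ (α * Fintype.card ι + β) := by
  have hk' : ∀ i, (k i : ℝ) ≠ 0 := fun i ↦ by exact_mod_cast (hk i).ne'
  have hmoment_nonneg : ∀ i, 0 ≤ ∫ t in a..b, ‖f i t‖ ^ k i :=
    fun i ↦ integral_nonneg hab fun t _ ↦ by positivity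
  have hexp : ∑ i, (α * k i + β) * (k i : ℝ)⁻¹ = α * Fintype.card ι + β := by
    simp only [add_mul, mul_assoc, mul_inv_cancel₀ (hk' _), Finset.sum_add_distrib,
      ← Finset.mul_sum, hsum]
    simp
  calc ∫ t in a..b, ‖∏ i, f i t‖
      ≤ ∏ i, (∫ t in a..b, ‖f i t‖ ^ k i) ^ (k i : ℝ)⁻¹ := by
        simp only [integral_of_le hab, norm_prod, ← Real.rpow_natCast]
        exact integral_prod_le_prod_integral_rpow_rpow_inv _
          (fun i _ ↦ ae_of_all _ fun t ↦ norm_nonneg _)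
          (fun i _ ↦ Nat.cast_pos.2 (hk i)) hsum
          fun i _ ↦ by simpa only [Real.rpow_natCast] using (hint i).1.integrable
    _ ≤ ∏ i, (c i * X ^ (α * k i + β)) ^ (k i : ℝ)⁻¹ :=
        Finset.prod_le_prod (fun i _ ↦ Real.rpow_nonneg (hmoment_nonneg i) _) fun i _ ↦
          Real.rpow_le_rpow (hmoment_nonneg i) (hmoment i) (by positivity)
    _ = (∏ i, c i ^ (k i : ℝ)⁻¹) * X ^ (α * Fintype.card ι + β) := by
        simp only [Real.mul_rpow (hc _) (Real.rpow_nonneg hX.le _), ← Real.rpow_mul hX.le,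
          Finset.prod_mul_distrib, ← Real.rpow_sum_of_pos hX, hexp]

theorem DirichletCharacter.LFunction_eq_riemannZeta_of_eq_one {N : ℕ} [NeZero N] (hN : N = 1)
    (χ : DirichletCharacter ℂ N) : χ.LFunction = riemannZeta := by
  subst hN
  exact LFunction_modOne_eq

theorem DirichletCharacter.continuous_LFunction_vertical_line {N : ℕ} [NeZero N]
    (χ : DirichletCharacter ℂ N) {σ : ℂ} (hσ : σ.re ≠ 1) :
    Continuous fun t : ℝ ↦ χ.LFunction (σ + t * I) := by
  refine continuous_iff_continuousAt.2 fun t ↦ ?_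
  have hne : σ + t * I ≠ 1 := fun h ↦ hσ <| by simpa using congrArg re h
  exact (χ.differentiableAt_LFunction _ (.inl hne)).continuousAt.comp
    (f := fun t : ℝ ↦ σ + t * I) (by fun_prop)

theorem exists_exponents_sum_inv_eq_one {ι : Type*} [Fintype ι] (j₀ : ι)
    (h4 : 4 ≤ Fintype.card ι) (h12 : Fintype.card ι ≤ 12) :
    ∃ k : ι → ℕ, (∀ j, k j = 4 ∨ k j = 12 ∨ (j = j₀ ∧ k j = 6)) ∧ ∑ j, (k j : ℝ)⁻¹ = 1 := by
  classical
  generalize hn : Fintype.card ι = n at h4 h12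
  obtain ⟨A, hA, hAcard⟩ : ∃ A ⊆ (if Odd n then Finset.univ.erase j₀ else Finset.univ),
      A.card = (12 - n) / 2 := by
    refine Finset.exists_subset_card_eq ?_
    split_ifs with hodd
    · rw [Finset.card_erase_of_mem (Finset.mem_univ _), Finset.card_univ, hn]
      obtain ⟨m, rfl⟩ := hodd; omega
    · rw [Finset.card_univ, hn]; omega
  have hj₀ : j₀ ∈ A → ¬Odd n := fun hmem hodd ↦ by
    simpa [if_pos hodd] using hA hmem
  refine ⟨fun j ↦ if j ∈ A then 4 else if j = j₀ ∧ Odd n then 6 else 12,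
    fun j ↦ by by_cases j ∈ A <;> by_cases j = j₀ ∧ Odd n <;> simp_all, ?_⟩
  have hsplit : ∀ j, ((if j ∈ A then 4 else if j = j₀ ∧ Odd n then 6 else 12 : ℕ) : ℝ)⁻¹ =
      12⁻¹ + (if j ∈ A then 6⁻¹ else 0) + if j = j₀ ∧ Odd n then 12⁻¹ else 0 := by
    intro j
    split_ifs with hmem hsix
    · exact (hj₀ (hsix.1 ▸ hmem) hsix.2).elim
    all_goals norm_num
  simp only [hsplit]
  simp only [Finset.sum_add_distrib, Finset.sum_const, Finset.sum_ite_mem,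
    Finset.univ_inter, ite_and, Finset.sum_ite_eq', Finset.mem_univ, if_true, Finset.card_univ,
    hn, hAcard, nsmul_eq_mul]
  rcases Nat.even_or_odd n with hpar | hpar
  · have h : n + 2 * ((12 - n) / 2) = 12 := by obtain ⟨m, rfl⟩ := hpar; omega
    have h' : (n : ℝ) + 2 * (((12 - n) / 2 : ℕ) : ℝ) = 12 := by exact_mod_cast h
    rw [if_neg (Nat.not_odd_iff_even.2 hpar)]
    linear_combination h' / 12
  · have h : n + 2 * ((12 - n) / 2) + 1 = 12 := by obtain ⟨m, rfl⟩ := hpar; omega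
    have h' : (n : ℝ) + 2 * (((12 - n) / 2 : ℕ) : ℝ) + 1 = 12 := by exact_mod_cast h
    rw [if_pos hpar]
    linear_combination h' / 12

theorem first_moment_small_degree_general (K : Type) [Field K] [NumberField K]
    (hdeg4 : 4 ≤ Module.finrank ℚ K) (hdeg12 : Module.finrank ℚ K ≤ 12)
    (Z : ℂ → ℂ) (q : Fin (Module.finrank ℚ K) → ℕ) (hq : ∀ j, NeZero (q j))
    (χ : ∀ j, DirichletCharacter ℂ (q j))
    (j₀ : Fin (Module.finrank ℚ K)) (hq₀ : q j₀ = 1)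
    (hfact : ∀ t : ℝ,
      Z (1 / 2 + t * I) = ∏ j, DirichletCharacter.LFunction (χ j) (1 / 2 + t * I))
    (hL4 : ∀ ε : ℝ, 0 < ε → ∃ C : ℝ, 0 < C ∧ ∀ j, ∀ T : ℝ, 2 ≤ T →
      (∫ t in T..(2 * T), ‖DirichletCharacter.LFunction (χ j) (1 / 2 + t * I)‖ ^ (4 : ℕ))
        ≤ C * q j * T ^ (1 + ε))
    (hL12 : ∀ ε : ℝ, 0 < ε → ∃ C : ℝ, 0 < C ∧ ∀ j, ∀ T : ℝ, 2 ≤ T →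
      (∫ t in T..(2 * T), ‖DirichletCharacter.LFunction (χ j) (1 / 2 + t * I)‖ ^ (12 : ℕ))
        ≤ C * (q j : ℝ) ^ (3 : ℕ) * T ^ (2 + ε))
    (hζ6 : ∀ ε : ℝ, 0 < ε → ∃ C : ℝ, 0 < C ∧ ∀ T : ℝ, 2 ≤ T →
      (∫ t in T..(2 * T), ‖riemannZeta (1 / 2 + t * I)‖ ^ (6 : ℕ)) ≤ C * T ^ (5 / 4 + ε)) :
    ∀ ε : ℝ, 0 < ε → ∃ C : ℝ, 0 < C ∧ ∀ T : ℝ, 2 ≤ T →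
      (∫ t in T..(2 * T), ‖Z (1 / 2 + t * I)‖)
        ≤ C * T ^ ((Module.finrank ℚ K : ℝ) / 8 + 1 / 2 + ε) := by
  intro ε hε
  obtain ⟨k, hk, hsum⟩ := exists_exponents_sum_inv_eq_one j₀
    (by rwa [Fintype.card_fin]) (by rwa [Fintype.card_fin])
  have hmoment : ∀ j, ∃ c > 0, ∀ T : ℝ, 2 ≤ T →
      ∫ t in T..(2 * T), ‖(χ j).LFunction (1 / 2 + t * I)‖ ^ k j ≤
        c * T ^ (1 / 8 * k j + (1 / 2 + ε)) := by
    obtain ⟨C₄, hC₄, hbound₄⟩ := hL4 ε hε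
    obtain ⟨C₁₂, hC₁₂, hbound₁₂⟩ := hL12 ε hε
    obtain ⟨C₆, hC₆, hbound₆⟩ := hζ6 ε hε
    have hq_pos : ∀ j, (0 : ℝ) < q j := fun j ↦ Nat.cast_pos.2 (Nat.pos_of_neZero _)
    intro j
    rcases hk j with hkj | hkj | ⟨rfl, hkj⟩ <;> rw [hkj]
    · exact ⟨C₄ * q j, mul_pos hC₄ (hq_pos j), fun T hT ↦ by
        convert hbound₄ j T hT using 3; push_cast; ring⟩
    · exact ⟨C₁₂ * (q j : ℝ) ^ 3, mul_pos hC₁₂ (pow_pos (hq_pos j) 3), fun T hT ↦ by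
        convert hbound₁₂ j T hT using 3; push_cast; ring⟩
    · rw [(χ j).LFunction_eq_riemannZeta_of_eq_one hq₀]
      exact ⟨C₆, hC₆, fun T hT ↦ by convert hbound₆ T hT using 3; push_cast; ring⟩
  choose c hc hbound using hmoment
  refine ⟨∏ j, c j ^ (k j : ℝ)⁻¹, Finset.prod_pos fun j _ ↦ Real.rpow_pos_of_pos (hc j) _,
    fun T hT ↦ ?_⟩
  have hk_pos : ∀ j, 0 < k j := fun j ↦ by rcases hk j with h | h | ⟨-, h⟩ <;> omega
  have hint : ∀ j, IntervalIntegrable (fun t ↦ ‖(χ j).LFunction (1 / 2 + t * I)‖ ^ k j)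
      volume T (2 * T) := fun j ↦
    (((χ j).continuous_LFunction_vertical_line (by norm_num)).norm.pow _).intervalIntegrable _ _
  simp_rw [hfact]
  refine (intervalIntegral_norm_prod_le_of_moment_bounds _ hk_pos hsum (by linarith) hint
    (fun j ↦ (hc j).le) (by linarith) fun j ↦ hbound j T hT).trans_eq ?_
  rw [Fintype.card_fin]
  ring_nf

/-- Lemma 3 of the paper, first case: let `K` be an abelian number field of degree
`4 ≤ n_K ≤ 12`, with Dedekind zeta function `Z` factoring on the critical line as
`∏_j L(s, χ_j)` (with `χ_{j₀}` trivial of modulus `1`, so its `L`-function is the Riemann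
zeta function). Assuming the fourth-moment bounds `∫_T^{2T}|ζ(1/2+it)|⁴dt ≪ T^{1+ε}` and
`∫_T^{2T}|L(1/2+it,χ)|⁴dt ≪ q T^{1+ε}`, the twelfth-moment bounds
`∫_T^{2T}|ζ(1/2+it)|¹²dt ≪ T^{2+ε}` and `∫_T^{2T}|L(1/2+it,χ)|¹²dt ≪ q³ T^{2+ε}`, and the
sixth-moment bound `∫_T^{2T}|ζ(1/2+it)|⁶dt ≪ T^{5/4+ε}`, one has
`∫_T^{2T}|ζ_K(1/2+it)| dt ≪_{K,ε} T^{n_K/8+1/2+ε}` for `T ≥ 2`. -/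
theorem first_moment_small_degree (K : Type) [Field K] [NumberField K]
    [IsGalois ℚ K] (habelian : ∀ σ τ : K ≃ₐ[ℚ] K, σ * τ = τ * σ)
    (hdeg4 : 4 ≤ Module.finrank ℚ K) (hdeg12 : Module.finrank ℚ K ≤ 12)
    (Z : ℂ → ℂ) (q : Fin (Module.finrank ℚ K) → ℕ) (hq : ∀ j, NeZero (q j))
    (χ : ∀ j, DirichletCharacter ℂ (q j))
    (hχ : ∀ j, (χ j).IsPrimitive)
    (j₀ : Fin (Module.finrank ℚ K)) (hq₀ : q j₀ = 1) (hχ₀ : χ j₀ = 1)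
    (hseries : ∀ s : ℂ, 1 < s.re →
      Z s = ∑' I : {I : Ideal (𝓞 K) // I ≠ 0}, (absNorm I.1 : ℂ) ^ (-s))
    (hfact : ∀ t : ℝ,
      Z (1 / 2 + t * I) = ∏ j, DirichletCharacter.LFunction (χ j) (1 / 2 + t * I))
    (hζ4 : ∀ ε : ℝ, 0 < ε → ∃ C : ℝ, 0 < C ∧ ∀ T : ℝ, 2 ≤ T →
      (∫ t in T..(2 * T), ‖riemannZeta (1 / 2 + t * I)‖ ^ (4 : ℕ)) ≤ C * T ^ (1 + ε))
    (hL4 : ∀ ε : ℝ, 0 < ε → ∃ C : ℝ, 0 < C ∧ ∀ j, ∀ T : ℝ, 2 ≤ T →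
      (∫ t in T..(2 * T), ‖DirichletCharacter.LFunction (χ j) (1 / 2 + t * I)‖ ^ (4 : ℕ))
        ≤ C * q j * T ^ (1 + ε))
    (hζ12 : ∀ ε : ℝ, 0 < ε → ∃ C : ℝ, 0 < C ∧ ∀ T : ℝ, 2 ≤ T →
      (∫ t in T..(2 * T), ‖riemannZeta (1 / 2 + t * I)‖ ^ (12 : ℕ)) ≤ C * T ^ (2 + ε))
    (hL12 : ∀ ε : ℝ, 0 < ε → ∃ C : ℝ, 0 < C ∧ ∀ j, ∀ T : ℝ, 2 ≤ T →
      (∫ t in T..(2 * T), ‖DirichletCharacter.LFunction (χ j) (1 / 2 + t * I)‖ ^ (12 : ℕ))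
        ≤ C * (q j : ℝ) ^ (3 : ℕ) * T ^ (2 + ε))
    (hζ6 : ∀ ε : ℝ, 0 < ε → ∃ C : ℝ, 0 < C ∧ ∀ T : ℝ, 2 ≤ T →
      (∫ t in T..(2 * T), ‖riemannZeta (1 / 2 + t * I)‖ ^ (6 : ℕ)) ≤ C * T ^ (5 / 4 + ε)) :
    ∀ ε : ℝ, 0 < ε → ∃ C : ℝ, 0 < C ∧ ∀ T : ℝ, 2 ≤ T →
      (∫ t in T..(2 * T), ‖Z (1 / 2 + t * I)‖)
        ≤ C * T ^ ((Module.finrank ℚ K : ℝ) / 8 + 1 / 2 + ε) :=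
  first_moment_small_degree_general K hdeg4 hdeg12 Z q hq χ j₀ hq₀ hfact hL4 hL12 hζ6
end

section
/- Let K be an abelian number field of degree n_K ≥ 13, and assume the twelfth-moment bounds ∫_T^{2T}|L(1/2+it,χ)|^{12}dt ≪ q³T^{2+ε} and the pointwise subconvexity bounds |L(1/2+it,χ)| ≪_{K,ε}(1+|t|)^{1/6+ε}, |ζ(1/2+it)| ≪_ε (1+|t|)^{(1−δ)/6+ε} for some 0 ≤ δ < 1. Then ∫_T^{2T}|ζ_K(1/2+it)| dt ≪_{K,ε} T^{(n_K−δ)/6+ε} for T ≥ 2. -/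
open NumberField Ideal Complex intervalIntegral

set_option maxHeartbeats 1000000 in
/-- Lemma 3 of the paper, second case: let `K` be an abelian number field of degree
`n_K ≥ 13`, with Dedekind zeta function `Z` factoring on the critical line as
`∏_j L(s, χ_j)` (with `χ_{j₀}` trivial of modulus `1`, so its `L`-function is the Riemann
zeta function). Assuming the twelfth-moment bounds
`∫_T^{2T}|L(1/2+it,χ)|¹²dt ≪ q³ T^{2+ε}` and the pointwise subconvexity bounds
`|L(1/2+it,χ)| ≪_{K,ε} (1+|t|)^{1/6+ε}` and `|ζ(1/2+it)| ≪_ε (1+|t|)^{(1-δ)/6+ε}` for some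
`0 ≤ δ < 1`, one has `∫_T^{2T}|ζ_K(1/2+it)| dt ≪_{K,ε} T^{(n_K-δ)/6+ε}` for `T ≥ 2`. -/
theorem first_moment_large_degree (K : Type) [Field K] [NumberField K]
    [IsGalois ℚ K] (habelian : ∀ σ τ : K ≃ₐ[ℚ] K, σ * τ = τ * σ)
    (hdeg : 13 ≤ Module.finrank ℚ K)
    (Z : ℂ → ℂ) (q : Fin (Module.finrank ℚ K) → ℕ) (hq : ∀ j, NeZero (q j))
    (χ : ∀ j, DirichletCharacter ℂ (q j))
    (hχ : ∀ j, (χ j).IsPrimitive)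
    (j₀ : Fin (Module.finrank ℚ K)) (hq₀ : q j₀ = 1) (hχ₀ : χ j₀ = 1)
    (hseries : ∀ s : ℂ, 1 < s.re →
      Z s = ∑' I : {I : Ideal (𝓞 K) // I ≠ 0}, (absNorm I.1 : ℂ) ^ (-s))
    (hfact : ∀ t : ℝ,
      Z (1 / 2 + t * I) = ∏ j, DirichletCharacter.LFunction (χ j) (1 / 2 + t * I))
    (δ : ℝ) (hδ0 : 0 ≤ δ) (hδ1 : δ < 1)
    (hL12 : ∀ ε : ℝ, 0 < ε → ∃ C : ℝ, 0 < C ∧ ∀ j, ∀ T : ℝ, 2 ≤ T →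
      (∫ t in T..(2 * T), ‖DirichletCharacter.LFunction (χ j) (1 / 2 + t * I)‖ ^ (12 : ℕ))
        ≤ C * (q j : ℝ) ^ (3 : ℕ) * T ^ (2 + ε))
    (hLsub : ∀ ε : ℝ, 0 < ε → ∃ C : ℝ, 0 < C ∧ ∀ j, ∀ t : ℝ,
      ‖DirichletCharacter.LFunction (χ j) (1 / 2 + t * I)‖ ≤ C * (1 + |t|) ^ (1 / 6 + ε))
    (hζsub : ∀ ε : ℝ, 0 < ε → ∃ C : ℝ, 0 < C ∧ ∀ t : ℝ,
      ‖riemannZeta (1 / 2 + t * I)‖ ≤ C * (1 + |t|) ^ ((1 - δ) / 6 + ε)) :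
    ∀ ε : ℝ, 0 < ε → ∃ C : ℝ, 0 < C ∧ ∀ T : ℝ, 2 ≤ T →
      (∫ t in T..(2 * T), ‖Z (1 / 2 + t * I)‖)
        ≤ C * T ^ (((Module.finrank ℚ K : ℝ) - δ) / 6 + ε) := by
  intro ε hε
  have hn13 : (13 : ℕ) ≤ (Module.finrank ℚ K) := hdeg
  have hnR : (13 : ℝ) ≤ ((Module.finrank ℚ K) : ℝ) := by exact_mod_cast hn13
  have hnpos : (0 : ℝ) < ((Module.finrank ℚ K) : ℝ) := by linarith
  set ε₁ : ℝ := ε / (Module.finrank ℚ K) with hε₁def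
  have hε₁ : 0 < ε₁ := div_pos hε hnpos
  obtain ⟨C₁, hC₁, hB12⟩ := hL12 ε₁ hε₁
  obtain ⟨C₂, hC₂, hBsub⟩ := hLsub ε₁ hε₁
  obtain ⟨C₃, hC₃, hBζ⟩ := hζsub ε₁ hε₁
  -- The L-function of `χ j₀` is the Riemann zeta function
  have hLζ : ∀ s : ℂ, DirichletCharacter.LFunction (χ j₀) s = riemannZeta s := by
    have key : ∀ (m : ℕ) (_ : NeZero m), m = 1 → ∀ (ψ : DirichletCharacter ℂ m) (s : ℂ),
        DirichletCharacter.LFunction ψ s = riemannZeta s := by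
      rintro m _ rfl ψ s
      rw [DirichletCharacter.LFunction_modOne_eq]
    exact key _ (hq j₀) hq₀ (χ j₀)
  -- abbreviation for the norms of the L-factors on the critical line
  set F : Fin (Module.finrank ℚ K) → ℝ → ℝ :=
    fun j t => ‖DirichletCharacter.LFunction (χ j) (1 / 2 + t * I)‖ with hF
  have hFnonneg : ∀ j t, 0 ≤ F j t := fun j t => norm_nonneg _
  have hs1 : ∀ t : ℝ, (1 / 2 + (t : ℂ) * I) ≠ 1 := by
    intro t h
    have := congrArg Complex.re h
    simp at this
  have hcont : ∀ j, Continuous (F j) := by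
    intro j
    apply Continuous.norm
    rw [continuous_iff_continuousAt]
    intro t
    have h1 : ContinuousAt (fun t : ℝ => (1 / 2 + (t : ℂ) * I)) t := by fun_prop
    exact ContinuousAt.comp (g := DirichletCharacter.LFunction (χ j))
      (f := fun t : ℝ => (1 / 2 + (t : ℂ) * I))
      ((DirichletCharacter.differentiableAt_LFunction (χ j) _
        (Or.inl (hs1 t))).continuousAt) h1
  -- choose twelve special indices, distinct from `j₀`
  have hcard : 12 ≤ (Finset.univ.erase j₀).card := by
    rw [Finset.card_erase_of_mem (Finset.mem_univ _), Finset.card_univ, Fintype.card_fin]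
    omega
  obtain ⟨S, hSsub, hScard⟩ := Finset.exists_subset_card_eq hcard
  have hSne : S.Nonempty := Finset.card_pos.mp (by omega)
  -- exponents
  set b₀ : ℝ := (1 - δ) / 6 + ε₁ with hb₀
  set b : ℝ := 1 / 6 + ε₁ with hb
  set a : ℝ := (((Module.finrank ℚ K) : ℝ) - 12 - δ) / 6 + (((Module.finrank ℚ K) : ℝ) - 12) * ε₁ with ha
  have hb₀0 : 0 ≤ b₀ := by rw [hb₀]; nlinarith
  have hb0 : 0 ≤ b := by rw [hb]; nlinarith
  have ha0 : 0 ≤ a := by rw [ha]; nlinarith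
  set Q : ℝ := ∑ j ∈ S, (q j : ℝ) ^ (3 : ℕ) with hQ
  have hQpos : 0 < Q := by
    refine Finset.sum_pos (fun j _ => ?_) hSne
    have : 0 < q j := Nat.pos_of_ne_zero (hq j).out
    positivity
  have hC₂p : (0:ℝ) < C₂ ^ ((Module.finrank ℚ K) - 13) := pow_pos hC₂ _
  have h3a : (0:ℝ) < (3:ℝ) ^ a := Real.rpow_pos_of_pos (by norm_num) a
  refine ⟨(3 : ℝ) ^ a * C₃ * C₂ ^ ((Module.finrank ℚ K) - 13) * (C₁ * Q),
    mul_pos (mul_pos (mul_pos h3a hC₃) hC₂p) (mul_pos hC₁ hQpos), ?_⟩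
  intro T hT
  have hT1 : (1 : ℝ) ≤ T := by linarith
  have hTle : T ≤ 2 * T := by linarith
  have h3T : (0 : ℝ) < 3 * T := by linarith
  have h3Ta : (0:ℝ) ≤ (3 * T) ^ a := (Real.rpow_pos_of_pos h3T a).le
  have h3Tb : (0:ℝ) ≤ (3 * T) ^ b := (Real.rpow_pos_of_pos h3T b).le
  have h3Tb₀ : (0:ℝ) ≤ (3 * T) ^ b₀ := (Real.rpow_pos_of_pos h3T b₀).le
  have hCb : (0:ℝ) ≤ (C₂ * (3 * T) ^ b) ^ ((Module.finrank ℚ K) - 13) :=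
    pow_nonneg (mul_nonneg hC₂.le h3Tb) _
  -- pointwise bound on [T, 2T]
  have hpoint : ∀ t ∈ Set.Icc T (2 * T),
      ‖Z (1 / 2 + t * I)‖ ≤ (C₃ * C₂ ^ ((Module.finrank ℚ K) - 13) * (3 * T) ^ a) *
        ∑ j ∈ S, (F j t) ^ (12 : ℕ) := by
    intro t ht
    obtain ⟨ht1, ht2⟩ := ht
    have htpos : 0 < t := by linarith
    have h1t : 1 + |t| ≤ 3 * T := by
      rw [abs_of_pos htpos]; linarith
    have h1t0 : (0 : ℝ) ≤ 1 + |t| := by positivity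
    -- bound on the zeta factor
    have hz : F j₀ t ≤ C₃ * (3 * T) ^ b₀ := by
      calc F j₀ t = ‖riemannZeta (1 / 2 + t * I)‖ := by rw [hF]; simp only; rw [hLζ]
        _ ≤ C₃ * (1 + |t|) ^ b₀ := hBζ t
        _ ≤ C₃ * (3 * T) ^ b₀ :=
            mul_le_mul_of_nonneg_left (Real.rpow_le_rpow h1t0 h1t hb₀0) hC₃.le
    -- bound on generic factors
    have hgen : ∀ j, F j t ≤ C₂ * (3 * T) ^ b := by
      intro j
      calc F j t ≤ C₂ * (1 + |t|) ^ b := hBsub j t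
        _ ≤ C₂ * (3 * T) ^ b :=
            mul_le_mul_of_nonneg_left (Real.rpow_le_rpow h1t0 h1t hb0) hC₂.le
    -- bound the product over S by the sum of 12-th powers
    have hSmax : ∏ j ∈ S, F j t ≤ ∑ j ∈ S, (F j t) ^ (12 : ℕ) := by
      obtain ⟨j₁, hj₁S, hj₁max⟩ := S.exists_max_image (fun j => F j t) hSne
      calc ∏ j ∈ S, F j t ≤ ∏ _j ∈ S, F j₁ t :=
            Finset.prod_le_prod (fun j _ => hFnonneg j t) (fun j hj => hj₁max j hj)
        _ = (F j₁ t) ^ (12 : ℕ) := by rw [Finset.prod_const, hScard]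
        _ ≤ ∑ j ∈ S, (F j t) ^ (12 : ℕ) :=
            Finset.single_le_sum (f := fun j => (F j t) ^ (12 : ℕ))
              (fun j _ => pow_nonneg (hFnonneg j t) 12) hj₁S
    -- decompose the full product
    have hfull : ‖Z (1 / 2 + t * I)‖
        = F j₀ t * ((∏ j ∈ Finset.univ.erase j₀ \ S, F j t) * ∏ j ∈ S, F j t) := by
      rw [hfact t, norm_prod, ← Finset.mul_prod_erase _ _ (Finset.mem_univ j₀),
        ← Finset.prod_sdiff hSsub]
    have hcard' : (Finset.univ.erase j₀ \ S).card = (Module.finrank ℚ K) - 13 := by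
      rw [Finset.card_sdiff_of_subset hSsub, Finset.card_erase_of_mem (Finset.mem_univ _),
        Finset.card_univ, Fintype.card_fin, hScard]
      omega
    have htail : (∏ j ∈ Finset.univ.erase j₀ \ S, F j t)
        ≤ (C₂ * (3 * T) ^ b) ^ ((Module.finrank ℚ K) - 13) := by
      rw [← hcard']
      calc (∏ j ∈ Finset.univ.erase j₀ \ S, F j t)
          ≤ ∏ _j ∈ Finset.univ.erase j₀ \ S, (C₂ * (3 * T) ^ b) :=
            Finset.prod_le_prod (fun j _ => hFnonneg j t) (fun j _ => hgen j)
        _ = (C₂ * (3 * T) ^ b) ^ (Finset.univ.erase j₀ \ S).card := Finset.prod_const _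
    have hmain : ‖Z (1 / 2 + t * I)‖
        ≤ (C₃ * (3 * T) ^ b₀) * ((C₂ * (3 * T) ^ b) ^ ((Module.finrank ℚ K) - 13) *
          ∑ j ∈ S, (F j t) ^ (12 : ℕ)) := by
      rw [hfull]
      have hprodS : (0 : ℝ) ≤ ∏ j ∈ S, F j t :=
        Finset.prod_nonneg fun j _ => hFnonneg j t
      have htail0 : (0 : ℝ) ≤ ∏ j ∈ Finset.univ.erase j₀ \ S, F j t :=
        Finset.prod_nonneg fun j _ => hFnonneg j t
      have h1 : (∏ j ∈ Finset.univ.erase j₀ \ S, F j t) * ∏ j ∈ S, F j t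
          ≤ (C₂ * (3 * T) ^ b) ^ ((Module.finrank ℚ K) - 13) * ∑ j ∈ S, (F j t) ^ (12 : ℕ) :=
        mul_le_mul htail hSmax hprodS hCb
      have hsum0 : (0:ℝ) ≤ ∑ j ∈ S, (F j t) ^ (12 : ℕ) :=
        Finset.sum_nonneg fun j _ => pow_nonneg (hFnonneg j t) 12
      exact mul_le_mul hz h1 (mul_nonneg htail0 hprodS) (mul_nonneg hC₃.le h3Tb₀)
    refine hmain.trans (le_of_eq ?_)
    -- collect the powers of (3T)
    have hpow : ((3 * T : ℝ) ^ b) ^ ((Module.finrank ℚ K) - 13) = (3 * T) ^ (b * (((Module.finrank ℚ K) - 13 : ℕ) : ℝ)) := by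
      rw [← Real.rpow_natCast ((3 * T : ℝ) ^ b) ((Module.finrank ℚ K) - 13), ← Real.rpow_mul h3T.le]
    have hcast : (((Module.finrank ℚ K) - 13 : ℕ) : ℝ) = ((Module.finrank ℚ K) : ℝ) - 13 := by
      rw [Nat.cast_sub hn13]; norm_num
    have hexp : b₀ + b * (((Module.finrank ℚ K) - 13 : ℕ) : ℝ) = a := by
      rw [hcast, hb₀, hb, ha]; ring
    rw [mul_pow, hpow, ← mul_assoc, ← mul_assoc]
    rw [show C₃ * (3 * T) ^ b₀ * C₂ ^ ((Module.finrank ℚ K) - 13) * (3 * T) ^ (b * (((Module.finrank ℚ K) - 13 : ℕ) : ℝ))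
        = C₃ * C₂ ^ ((Module.finrank ℚ K) - 13) * ((3 * T) ^ b₀ * (3 * T) ^ (b * (((Module.finrank ℚ K) - 13 : ℕ) : ℝ))) by ring,
      ← Real.rpow_add h3T, hexp]
  -- integrate the pointwise bound
  have hint : ∀ j : Fin (Module.finrank ℚ K), IntervalIntegrable (fun t => (F j t) ^ (12 : ℕ))
      MeasureTheory.volume T (2 * T) := fun j => ((hcont j).pow 12).intervalIntegrable _ _
  have hintZ : IntervalIntegrable (fun t => ‖Z (1 / 2 + t * I)‖)
      MeasureTheory.volume T (2 * T) := by
    have heq : (fun t : ℝ => ‖Z (1 / 2 + t * I)‖) = fun t => ∏ j, F j t := by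
      funext t
      rw [hfact t, norm_prod]
    rw [heq]
    exact (continuous_finset_prod _ fun j _ => hcont j).intervalIntegrable _ _
  have hintR : IntervalIntegrable (fun t => (C₃ * C₂ ^ ((Module.finrank ℚ K) - 13) * (3 * T) ^ a) *
      ∑ j ∈ S, (F j t) ^ (12 : ℕ)) MeasureTheory.volume T (2 * T) :=
    (continuous_const.mul (continuous_finset_sum _
      fun j _ => (hcont j).pow 12)).intervalIntegrable _ _
  calc (∫ t in T..(2 * T), ‖Z (1 / 2 + t * I)‖)
      ≤ ∫ t in T..(2 * T), (C₃ * C₂ ^ ((Module.finrank ℚ K) - 13) * (3 * T) ^ a) *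
          ∑ j ∈ S, (F j t) ^ (12 : ℕ) :=
        intervalIntegral.integral_mono_on hTle hintZ hintR hpoint
    _ = (C₃ * C₂ ^ ((Module.finrank ℚ K) - 13) * (3 * T) ^ a) *
          ∑ j ∈ S, ∫ t in T..(2 * T), (F j t) ^ (12 : ℕ) := by
        rw [intervalIntegral.integral_const_mul,
          intervalIntegral.integral_finset_sum (fun j _ => hint j)]
    _ ≤ (C₃ * C₂ ^ ((Module.finrank ℚ K) - 13) * (3 * T) ^ a) *
          ∑ j ∈ S, C₁ * (q j : ℝ) ^ (3 : ℕ) * T ^ (2 + ε₁) := by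
        refine mul_le_mul_of_nonneg_left (Finset.sum_le_sum fun j _ => ?_)
          (mul_nonneg (mul_nonneg hC₃.le hC₂p.le) h3Ta)
        exact hB12 j T hT
    _ = (3 : ℝ) ^ a * C₃ * C₂ ^ ((Module.finrank ℚ K) - 13) * (C₁ * Q) * (T ^ a * T ^ ((2 : ℝ) + ε₁)) := by
        rw [Real.mul_rpow (by norm_num : (0:ℝ) ≤ 3) (by linarith : (0:ℝ) ≤ T), hQ,
          ← Finset.sum_mul, ← Finset.mul_sum]
        ring
    _ = (3 : ℝ) ^ a * C₃ * C₂ ^ ((Module.finrank ℚ K) - 13) * (C₁ * Q) * T ^ (a + ((2 : ℝ) + ε₁)) := by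
        rw [← Real.rpow_add (by linarith : (0:ℝ) < T)]
    _ ≤ (3 : ℝ) ^ a * C₃ * C₂ ^ ((Module.finrank ℚ K) - 13) * (C₁ * Q) *
          T ^ ((((Module.finrank ℚ K) : ℝ) - δ) / 6 + ε) := by
        refine mul_le_mul_of_nonneg_left ?_
          (mul_nonneg (mul_nonneg (mul_nonneg h3a.le hC₃.le) hC₂p.le)
            (mul_nonneg hC₁.le hQpos.le))
        refine Real.rpow_le_rpow_of_exponent_le hT1 ?_
        have h1 : (((Module.finrank ℚ K) : ℝ) - 11) * ε₁ ≤ ε := by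
          rw [hε₁def, div_eq_mul_inv]
          calc (((Module.finrank ℚ K) : ℝ) - 11) * (ε * ((Module.finrank ℚ K) : ℝ)⁻¹)
              ≤ ((Module.finrank ℚ K) : ℝ) * (ε * ((Module.finrank ℚ K) : ℝ)⁻¹) :=
                mul_le_mul_of_nonneg_right (by linarith) (by positivity)
            _ = ε := by field_simp
        rw [ha]
        nlinarith
end
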